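/- The resultant of the two polynomials α¹⁸ - 3α¹⁶ + 12α¹⁴ - 16α¹² + 62α¹⁰ - 38α⁸ + 44α⁶ - 8α⁴ + 9α² + 1 and α¹² + 2α¹⁰ + 15α⁸ + 12α⁶ + 15α⁴ + 2α² + 1 in Z[α] equals 2⁸⁰ · 53². In particular these two polynomials have no common root in any field of characteristic 0. -/

import Mathlib

open Polynomial

/-- The Sylvester matrix of `f` and `g`, regarded as polynomials of degree
(at most) `m` and `n` respectively. -/
def sylvester {R : Type*} [CommRing R] (f g : Polynomial R) (m n : ℕ) :
    Matrix (Fin (n + m)) (Fin (n + m)) R :=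
  Matrix.of fun i j =>
    if (i : ℕ) < n then
      (if (i : ℕ) ≤ (j : ℕ) then f.coeff ((j : ℕ) - (i : ℕ)) else 0)
    else
      (if (i : ℕ) - n ≤ (j : ℕ) then g.coeff ((j : ℕ) - ((i : ℕ) - n)) else 0)

/-- The resultant of `f` and `g` (of degrees `m` and `n`), as the determinant
of their Sylvester matrix. -/
def resultant {R : Type*} [CommRing R] (f g : Polynomial R) (m n : ℕ) : R :=
  (_root_.sylvester f g m n).det

noncomputable section

/-- `α¹⁸ - 3α¹⁶ + 12α¹⁴ - 16α¹² + 62α¹⁰ - 38α⁸ + 44α⁶ - 8α⁴ + 9α² + 1 ∈ ℤ[α]`. -/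
def p18 : Polynomial ℤ :=
  X ^ 18 - 3 * X ^ 16 + 12 * X ^ 14 - 16 * X ^ 12 + 62 * X ^ 10 - 38 * X ^ 8 +
    44 * X ^ 6 - 8 * X ^ 4 + 9 * X ^ 2 + 1

/-- `α¹² + 2α¹⁰ + 15α⁸ + 12α⁶ + 15α⁴ + 2α² + 1 ∈ ℤ[α]`. -/
def p12 : Polynomial ℤ :=
  X ^ 12 + 2 * X ^ 10 + 15 * X ^ 8 + 12 * X ^ 6 + 15 * X ^ 4 + 2 * X ^ 2 + 1

/-!
The resultant changes only by explicit factors under a step of the Euclidean algorithm: if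
`a f = g q + b r`, then `Res(f, g)` is `Res(g, r)` times powers of `a`, `b` and the leading
coefficient of `g`. Running the primitive remainder sequence of the two polynomials (in `ℚ[X]`,
where the factors can be divided out) reaches a constant after six steps, which yields the value
`2⁸⁰ · 53²`. Since the resultant is a combination `u p₁₈ + v p₁₂`, a common root would force
`2⁸⁰ · 53² = 0`, impossible in characteristic `0`.
-/

theorem sylvester_eq_transpose {R : Type*} [CommRing R] {f g : R[X]} {m n : ℕ}
    (hf : f.natDegree ≤ m) (hg : g.natDegree ≤ n) :
    _root_.sylvester f g m n = (g.sylvester f n m).transpose := by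
  ext i j
  induction i using Fin.addCases with
  | left i =>
    simp only [_root_.sylvester, Polynomial.sylvester, Matrix.of_apply, Matrix.transpose_apply,
      Fin.val_castAdd, Fin.is_lt, if_true, Fin.addCases_left, Set.mem_Icc]
    split_ifs <;> first | rfl | omega | exact f.coeff_eq_zero_of_natDegree_lt (by omega)
  | right i =>
    simp only [_root_.sylvester, Polynomial.sylvester, Matrix.of_apply, Matrix.transpose_apply,
      Fin.val_natAdd, Fin.addCases_right, Set.mem_Icc, Nat.add_sub_cancel_left]
    split_ifs <;> first | rfl | omega | exact g.coeff_eq_zero_of_natDegree_lt (by omega)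

theorem resultant_eq_polynomial_resultant {R : Type*} [CommRing R] {f g : R[X]} {m n : ℕ}
    (hf : f.natDegree ≤ m) (hg : g.natDegree ≤ n) :
    _root_.resultant f g m n = g.resultant f n m := by
  rw [_root_.resultant, sylvester_eq_transpose hf hg, Matrix.det_transpose, Polynomial.resultant]

namespace Polynomial

theorem pow_mul_resultant_eq_of_C_mul_eq_mul_add_C_mul {R : Type*} [CommRing R]
    {f g q r : R[X]} {a b : R} {m n k : ℕ} (h : C a * f = g * q + C b * r)
    (hq : q.natDegree + n ≤ m) (hg : g.natDegree ≤ n) (hr : r.natDegree ≤ k) (hk : k ≤ m) :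
    a ^ n * resultant f g m n =
      (-1) ^ (m * n) * b ^ n * g.coeff n ^ (m - k) * resultant g r n k := by
  obtain ⟨d, rfl⟩ := Nat.exists_eq_add_of_le hk
  rw [← resultant_C_mul_left, h, add_comm, resultant_add_mul_left _ _ _ _ _ hq hg,
    resultant_C_mul_left, resultant_add_left_deg _ _ _ _ _ hr, resultant_comm r,
    Nat.add_sub_cancel_left, add_mul, pow_add]
  ring

theorem resultant_eq_of_C_mul_eq_mul_add_C_mul {K : Type*} [Field K] {f g q r : K[X]} {a b : K}
    {m n k : ℕ} (ha : a ≠ 0) (h : C a * f = g * q + C b * r) (hq : q.natDegree + n ≤ m)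
    (hg : g.natDegree ≤ n) (hr : r.natDegree ≤ k) (hk : k ≤ m) :
    resultant f g m n = (-1) ^ (m * n) * (b / a) ^ n * g.coeff n ^ (m - k) * resultant g r n k := by
  have := pow_mul_resultant_eq_of_C_mul_eq_mul_add_C_mul h hq hg hr hk
  rw [div_pow]
  field_simp
  linear_combination this

theorem algebraMap_resultant_eq_zero_of_aeval_eq_zero {R A : Type*} [CommRing R] [CommRing A]
    [Algebra R A] {f g : R[X]} {m n : ℕ} (hf : f.natDegree ≤ m) (hg : g.natDegree ≤ n)
    (hmn : m ≠ 0 ∨ n ≠ 0) {x : A} (hfx : aeval x f = 0) (hgx : aeval x g = 0) :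
    algebraMap R A (resultant f g m n) = 0 := by
  obtain ⟨p, q, -, -, h⟩ := exists_mul_add_mul_eq_C_resultant f g hf hg hmn
  simpa [hfx, hgx] using congr(aeval x $h).symm

end Polynomial

theorem natDegree_p18_le : p18.natDegree ≤ 18 := by unfold p18; compute_degree!

theorem natDegree_p12_le : p12.natDegree ≤ 12 := by unfold p12; compute_degree!

-- The primitive remainder sequence of `p18` and `p12`, named by degree.
def p10 : ℚ[X] := 2 * X ^ 10 + 17 * X ^ 8 + 14 * X ^ 6 + 16 * X ^ 4 + 2 * X ^ 2 + 1

def p8 : ℚ[X] := 253 * X ^ 8 + 198 * X ^ 6 + 264 * X ^ 4 + 32 * X ^ 2 + 17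

def p6 : ℚ[X] := 121 * X ^ 6 + 261 * X ^ 4 + 63 * X ^ 2 + 27

def p4 : ℚ[X] := 1110 * X ^ 4 + 197 * X ^ 2 + 119

def p2 : ℚ[X] := 6959 * X ^ 2 + 1223

theorem resultant_map_p18_p12 :
    Polynomial.resultant (p18.map (Int.castRingHom ℚ)) (p12.map (Int.castRingHom ℚ)) 18 12 =
      2 ^ 80 * 53 ^ 2 := by
  have e₁ : C 1 * p18.map (Int.castRingHom ℚ) =
      p12.map (Int.castRingHom ℚ) * (X ^ 6 - 5 * X ^ 4 + 7 * X ^ 2 + 33) + C (-32) * p10 := by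
    simp only [p18, p12, p10, Polynomial.map_add, Polynomial.map_sub, Polynomial.map_mul,
      Polynomial.map_pow, Polynomial.map_X, Polynomial.map_one, Polynomial.map_ofNat, map_one,
      map_neg, map_ofNat]
    ring
  have e₂ : C 4 * p12.map (Int.castRingHom ℚ) = p10 * (2 * X ^ 2 - 13) + C 1 * p8 := by
    simp only [p12, p10, p8, Polynomial.map_add, Polynomial.map_mul, Polynomial.map_pow,
      Polynomial.map_X, Polynomial.map_one, Polynomial.map_ofNat, map_one, map_ofNat]
    ring
  have e₃ : C 5819 * p10 = p8 * (46 * X ^ 2 + 355) + C (-8) * p6 := by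
    simp only [p10, p8, p6, map_neg, map_ofNat]
    ring
  have e₄ : C 1331 * p8 = p6 * (2783 * X ^ 2 - 3825) + C 1058 * p4 := by
    simp only [p8, p6, p4, map_ofNat]
    ring
  have e₅ : C 1232100 * p6 = p4 * (134310 * X ^ 2 + 265873) + C 1331 * p2 := by
    simp only [p6, p4, p2, map_ofNat]
    ring
  have e₆ : C 48427681 * p4 = p2 * (7724490 * X ^ 2 + 13393) + C 5746514400 * 1 := by
    simp only [p4, p2, map_ofNat]
    ring
  rw [resultant_eq_of_C_mul_eq_mul_add_C_mul (k := 10) one_ne_zero e₁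
      (hg := natDegree_map_le.trans natDegree_p12_le),
    resultant_eq_of_C_mul_eq_mul_add_C_mul (k := 8) (by norm_num) e₂,
    resultant_eq_of_C_mul_eq_mul_add_C_mul (k := 6) (by norm_num) e₃,
    resultant_eq_of_C_mul_eq_mul_add_C_mul (k := 4) (by norm_num) e₄,
    resultant_eq_of_C_mul_eq_mul_add_C_mul (k := 2) (by norm_num) e₅,
    resultant_eq_of_C_mul_eq_mul_add_C_mul (k := 0) (by norm_num) e₆, resultant_zero_right_deg]
  · norm_num [p12, p10, p8, p6, p4, p2, coeff_X_pow, coeff_one]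
  all_goals first
    | exact Nat.add_le_of_le_sub (by norm_num) (by compute_degree!)
    | (simp only [p10, p8, p6, p4, p2]; compute_degree!)
    | simp

theorem resultant_p18_p12 : Polynomial.resultant p18 p12 18 12 = 2 ^ 80 * 53 ^ 2 := by
  have := resultant_map_p18_p12
  rw [resultant_map_map, eq_intCast] at this
  exact_mod_cast this

/-- The resultant of the two polynomials equals `2⁸⁰ · 53²`; in particular they
have no common root in any field of characteristic `0`. -/
theorem stmt_18 :
    _root_.resultant p18 p12 18 12 = 2 ^ 80 * 53 ^ 2 ∧
    ∀ (K : Type*) [Field K] [CharZero K] (α : K),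
      ¬(Polynomial.aeval α p18 = 0 ∧ Polynomial.aeval α p12 = 0) := by
  refine ⟨?_, fun K _ _ α ⟨h18, h12⟩ ↦ ?_⟩
  · rw [resultant_eq_polynomial_resultant natDegree_p18_le natDegree_p12_le, resultant_comm,
      resultant_p18_p12]
    norm_num
  · have := algebraMap_resultant_eq_zero_of_aeval_eq_zero natDegree_p18_le natDegree_p12_le
      (by norm_num) h18 h12
    rw [resultant_p18_p12] at this
    norm_num at this

end
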